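/- arXiv:1901.08571 — 5 statements merged into one kernel-verified Lean document; each statement's English description precedes it below -/
import Mathlib

section
/- Let m > 1/2, n ≥ 1 be an integer, and λ > 0. Let Σ and Ω be the n×n circulant matrices with (i,i')-th entries c_{(i−i') mod n} and d_{(i−i') mod n}, where c_j = (2/n) Σ_{k=1}^∞ cos(2πkj/n)/(2πk)^{2m} and d_j = (2/n) Σ_{k=1}^∞ cos(2πkj/n)/(2πk)^{4m}. Then Σ + λI_n is invertible, and for every y = (y_1,…,y_n) ∈ ℝⁿ and every quantizer Q with thresholds t_1 < … < t_{k−1} and values μ_1,…,μ_k, setting z = (Q(y_1),…,Q(y_n)), one has (z − y)ᵀ (Σ + λI_n)^{−1} Ω (Σ + λI_n)^{−1} (z − y) ≤ Σ_{j=1}^k Σ_{i=1}^n (μ_j − y_i)² 1(y_i ∈ R_j(t)). -/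
open Real MeasureTheory Matrix Finset

noncomputable section

/-- Quantization cells: `R_1 = (-∞, t_1]`, `R_j = (t_{j-1}, t_j]` for `2 ≤ j ≤ k-1`,
`R_k = (t_{k-1}, ∞)`. -/
def cell (k : ℕ) (t : ℕ → ℝ) (j : ℕ) : Set ℝ :=
  if j = 1 then Set.Iic (t 1)
  else if j = k then Set.Ioi (t (k - 1))
  else Set.Ioc (t (j - 1)) (t j)

/-- The quantizer `Q(y) = ∑_{j=1}^k μ_j 1(y ∈ R_j(t))`. -/
def quantizer (k : ℕ) (t μ : ℕ → ℝ) (y : ℝ) : ℝ :=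
  ∑ j ∈ Finset.Icc 1 k, μ j * Set.indicator (cell k t j) (fun _ => 1) y

/-- The circulant matrix `Σ` with entries `c_{(i - i') mod n}`,
`c_j = (2/n) ∑_{k=1}^∞ cos(2πkj/n)/(2πk)^{2m}`. -/
def SigmaMat (m : ℝ) (n : ℕ) : Matrix (Fin n) (Fin n) ℝ :=
  fun i i' => (2 / n) * ∑' kk : ℕ,
    Real.cos (2 * π * (kk + 1) * ((((i : ℤ) - (i' : ℤ)) % (n : ℤ)).toNat : ℝ) / n) /
      (2 * π * (kk + 1)) ^ (2 * m)

/-- The circulant matrix `Ω` with entries `d_{(i - i') mod n}`,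
`d_j = (2/n) ∑_{k=1}^∞ cos(2πkj/n)/(2πk)^{4m}`. -/
def OmegaMat (m : ℝ) (n : ℕ) : Matrix (Fin n) (Fin n) ℝ :=
  fun i i' => (2 / n) * ∑' kk : ℕ,
    Real.cos (2 * π * (kk + 1) * ((((i : ℤ) - (i' : ℤ)) % (n : ℤ)).toNat : ℝ) / n) /
      (2 * π * (kk + 1)) ^ (4 * m)


namespace QQFB
set_option maxRecDepth 8000

variable {n : ℕ}

/-- abbreviation for the primitive root -/
def zeta (n : ℕ) : ℂ := Complex.exp (2 * π * Complex.I / n)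

lemma zeta_prim (hn : 0 < n) : IsPrimitiveRoot (zeta n) n :=
  Complex.isPrimitiveRoot_exp n hn.ne'

lemma zeta_zpow_eq_one_iff (hn : 0 < n) (a : ℤ) : zeta n ^ a = 1 ↔ (n:ℤ) ∣ a :=
  (zeta_prim hn).zpow_eq_one_iff_dvd a

lemma zeta_zpow_eq_of_emod (hn : 0 < n) {a b : ℤ} (h : (n:ℤ) ∣ a - b) :
    zeta n ^ a = zeta n ^ b := by
  have h1 : zeta n ^ (a - b) = 1 := (zeta_zpow_eq_one_iff hn _).2 h
  have hz : zeta n ≠ 0 := Complex.exp_ne_zero _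
  rw [zpow_sub₀ hz] at h1
  have hzb : zeta n ^ b ≠ 0 := zpow_ne_zero _ hz
  field_simp at h1
  exact h1

lemma sum_zeta_pow (hn : 0 < n) (a : ℤ) :
    ∑ i : Fin n, zeta n ^ (a * (i:ℕ)) = if (n:ℤ) ∣ a then (n:ℂ) else 0 := by
  have hrw : ∀ i : Fin n, zeta n ^ (a * (i:ℕ)) = (zeta n ^ a) ^ (i:ℕ) := by
    intro i
    rw [_root_.zpow_mul, zpow_natCast]
  simp_rw [hrw]
  rw [Fin.sum_univ_eq_sum_range (fun j => (zeta n ^ a) ^ j)]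
  by_cases h : (n:ℤ) ∣ a
  · rw [if_pos h]
    have : zeta n ^ a = 1 := (zeta_zpow_eq_one_iff hn a).2 h
    simp [this]
  · rw [if_neg h]
    have hne : zeta n ^ a ≠ 1 := fun hh => h ((zeta_zpow_eq_one_iff hn a).1 hh)
    rw [geom_sum_eq hne]
    have : (zeta n ^ a) ^ n = 1 := by
      rw [← zpow_natCast, ← _root_.zpow_mul, mul_comm, _root_.zpow_mul, zpow_natCast,
        (zeta_prim hn).pow_eq_one, _root_.one_zpow]
    rw [this]
    simp

lemma summable_alpha {s : ℝ} (hs : 1 < s) :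
    Summable (fun kk : ℕ => ((2 * π * (kk + 1)) ^ s)⁻¹) := by
  have hcomp : ∀ kk : ℕ, ((2 * π * (kk + 1 : ℝ)) ^ s)⁻¹ ≤ (((kk:ℝ) + 1) ^ s)⁻¹ := by
    intro kk
    have h1 : (0:ℝ) < ((kk:ℝ) + 1) ^ s := rpow_pos_of_pos (by positivity) s
    have hle : ((kk:ℝ) + 1) ≤ 2 * π * ((kk:ℝ) + 1) := by
      nlinarith [pi_gt_three, (Nat.cast_nonneg kk : (0:ℝ) ≤ kk)]
    have h2 : ((kk:ℝ) + 1) ^ s ≤ (2 * π * ((kk:ℝ) + 1)) ^ s :=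
      rpow_le_rpow (by positivity) hle (by linarith)
    exact inv_anti₀ h1 h2
  have hbase : Summable (fun kk : ℕ => (((kk:ℝ) + 1) ^ s)⁻¹) := by
    have := (Real.summable_one_div_nat_rpow (p := s)).2 hs
    have := (summable_nat_add_iff 1).2 this
    simpa [one_div] using this
  exact Summable.of_nonneg_of_le (fun kk => by positivity) hcomp hbase


lemma zeta_ne_zero : zeta n ≠ 0 := Complex.exp_ne_zero _

lemma norm_zeta_zpow (a : ℤ) : ‖zeta n ^ a‖ = 1 := by
  rw [norm_zpow]
  have : ‖zeta n‖ = 1 := by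
    rw [zeta, Complex.norm_exp]
    have : (2 * (π:ℂ) * Complex.I / n).re = 0 := by
      simp [Complex.div_re]
    rw [this, Real.exp_zero]
  rw [this, _root_.one_zpow]

def Kmat (s : ℝ) (n : ℕ) : Matrix (Fin n) (Fin n) ℝ :=
  fun i i' => (2 / n) * ∑' kk : ℕ,
    Real.cos (2 * π * (kk + 1) * ((((i : ℤ) - (i' : ℤ)) % (n : ℤ)).toNat : ℝ) / n) /
      (2 * π * (kk + 1)) ^ s

def Ecol (n : ℕ) (l : Fin n) : Fin n → ℂ := fun i => zeta n ^ ((l:ℤ) * (i:ℤ))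

def indw (n : ℕ) (l : Fin n) (K : ℕ) : ℝ :=
  (if (n:ℤ) ∣ (K:ℤ) - (l:ℤ) then 1 else 0) + (if (n:ℤ) ∣ (K:ℤ) + (l:ℤ) then 1 else 0)

def eigval (s : ℝ) (n : ℕ) (l : Fin n) : ℝ :=
  ∑' kk : ℕ, ((2 * π * (kk + 1)) ^ s)⁻¹ * indw n l (kk + 1)

lemma cos_entry_eq (hn : 0 < n) (K : ℕ) (i i' : Fin n) :
    ((Real.cos (2 * π * K * ((((i : ℤ) - (i' : ℤ)) % (n : ℤ)).toNat : ℝ) / n) : ℝ) : ℂ)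
      = (zeta n ^ ((K:ℤ) * ((i:ℤ) - (i':ℤ))) + zeta n ^ ((-(K:ℤ)) * ((i:ℤ) - (i':ℤ)))) / 2 := by
  obtain ⟨jn, hjn⟩ : ∃ jn : ℕ, (((i:ℤ) - (i':ℤ)) % (n:ℤ)).toNat = jn := ⟨_, rfl⟩
  have hj : (jn:ℤ) = ((i:ℤ) - (i':ℤ)) % (n:ℤ) := by
    rw [← hjn]
    exact Int.toNat_of_nonneg (Int.emod_nonneg _ (by exact_mod_cast hn.ne'))
  have hdvd : (n:ℤ) ∣ (jn:ℤ) - ((i:ℤ) - (i':ℤ)) := by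
    rw [hj, Int.emod_def]
    exact ⟨-(((i:ℤ) - (i':ℤ)) / n), by ring⟩
  have key : ∀ a : ℤ, Complex.exp (((a * jn : ℤ) : ℂ) * (2 * π * Complex.I / n))
      = zeta n ^ (a * ((i:ℤ) - (i':ℤ))) := by
    intro a
    rw [Complex.exp_int_mul]
    show zeta n ^ (a * (jn:ℤ)) = _
    apply zeta_zpow_eq_of_emod hn
    have : a * (jn:ℤ) - a * ((i:ℤ) - (i':ℤ)) = a * ((jn:ℤ) - ((i:ℤ) - (i':ℤ))) := by ring
    rw [this]
    exact Dvd.dvd.mul_left hdvd a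
  rw [hjn, Complex.ofReal_cos, Complex.cos, ← key (K:ℤ), ← key (-(K:ℤ))]
  have hn' : ((n:ℝ):ℂ) ≠ 0 := by exact_mod_cast (Nat.cast_ne_zero (R := ℝ)).2 hn.ne'
  have h1 : ((2 * π * K * (jn : ℝ) / n : ℝ) : ℂ) * Complex.I
      = (((K:ℤ) * jn : ℤ) : ℂ) * (2 * π * Complex.I / n) := by
    push_cast
    field_simp
  have h2 : -(((2 * π * K * (jn : ℝ) / n : ℝ) : ℂ)) * Complex.I
      = ((-(K:ℤ) * jn : ℤ) : ℂ) * (2 * π * Complex.I / n) := by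
    rw [neg_mul, h1]
    push_cast
    ring
  rw [h1, h2]

lemma sum_cos_mul_E (hn : 0 < n) (K : ℕ) (l i : Fin n) :
    ∑ i' : Fin n,
      ((Real.cos (2 * π * K * ((((i : ℤ) - (i' : ℤ)) % (n : ℤ)).toNat : ℝ) / n) : ℝ) : ℂ) * Ecol n l i'
      = (n / 2 : ℂ) * ((indw n l K : ℝ) : ℂ) * Ecol n l i := by
  have hz : zeta n ≠ 0 := zeta_ne_zero
  have hterm : ∀ i' : Fin n,
      ((Real.cos (2 * π * K * ((((i : ℤ) - (i' : ℤ)) % (n : ℤ)).toNat : ℝ) / n) : ℝ) : ℂ) * Ecol n l i'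
      = (zeta n ^ ((K:ℤ) * (i:ℤ)) * zeta n ^ (((l:ℤ) - (K:ℤ)) * ((i':ℕ):ℤ))
        + zeta n ^ ((-(K:ℤ)) * (i:ℤ)) * zeta n ^ (((l:ℤ) + (K:ℤ)) * ((i':ℕ):ℤ))) / 2 := by
    intro i'
    have e1 : (K:ℤ) * ((i:ℤ) - (i':ℤ)) + (l:ℤ) * (i':ℤ)
        = (K:ℤ) * (i:ℤ) + ((l:ℤ) - (K:ℤ)) * ((i':ℕ):ℤ) := by push_cast; ring
    have e2 : (-(K:ℤ)) * ((i:ℤ) - (i':ℤ)) + (l:ℤ) * (i':ℤ)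
        = (-(K:ℤ)) * (i:ℤ) + ((l:ℤ) + (K:ℤ)) * ((i':ℕ):ℤ) := by push_cast; ring
    rw [cos_entry_eq hn K i i', Ecol]
    rw [div_mul_eq_mul_div, add_mul, ← zpow_add₀ hz, ← zpow_add₀ hz, e1, e2,
      zpow_add₀ hz, zpow_add₀ hz]
  simp_rw [hterm]
  rw [← Finset.sum_div, Finset.sum_add_distrib, ← Finset.mul_sum, ← Finset.mul_sum]
  have hs1 : ∑ i' : Fin n, zeta n ^ (((l:ℤ) - (K:ℤ)) * ((i':ℕ):ℤ))
      = if (n:ℤ) ∣ ((l:ℤ) - (K:ℤ)) then (n:ℂ) else 0 := by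
    have := sum_zeta_pow hn ((l:ℤ) - (K:ℤ))
    convert this using 2
  have hs2 : ∑ i' : Fin n, zeta n ^ (((l:ℤ) + (K:ℤ)) * ((i':ℕ):ℤ))
      = if (n:ℤ) ∣ ((l:ℤ) + (K:ℤ)) then (n:ℂ) else 0 := by
    have := sum_zeta_pow hn ((l:ℤ) + (K:ℤ))
    convert this using 2
  rw [hs1, hs2, indw]
  by_cases hd1 : (n:ℤ) ∣ (l:ℤ) - (K:ℤ) <;> by_cases hd2 : (n:ℤ) ∣ (l:ℤ) + (K:ℤ)
  · have hKi : zeta n ^ ((K:ℤ) * (i:ℤ)) = zeta n ^ ((l:ℤ) * (i:ℤ)) := by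
      apply zeta_zpow_eq_of_emod hn
      have : (K:ℤ) * (i:ℤ) - (l:ℤ) * (i:ℤ) = (-((l:ℤ) - (K:ℤ))) * (i:ℤ) := by ring
      rw [this]; exact Dvd.dvd.mul_right (dvd_neg.mpr hd1) _
    have hKi2 : zeta n ^ ((-(K:ℤ)) * (i:ℤ)) = zeta n ^ ((l:ℤ) * (i:ℤ)) := by
      apply zeta_zpow_eq_of_emod hn
      have : (-(K:ℤ)) * (i:ℤ) - (l:ℤ) * (i:ℤ) = (-((l:ℤ) + (K:ℤ))) * (i:ℤ) := by ring
      rw [this]; exact Dvd.dvd.mul_right (dvd_neg.mpr hd2) _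
    rw [if_pos hd1, if_pos hd2, if_pos (dvd_sub_comm.mp hd1), if_pos (by rwa [add_comm]),
      hKi, hKi2, Ecol]
    push_cast
    ring
  · have hKi : zeta n ^ ((K:ℤ) * (i:ℤ)) = zeta n ^ ((l:ℤ) * (i:ℤ)) := by
      apply zeta_zpow_eq_of_emod hn
      have : (K:ℤ) * (i:ℤ) - (l:ℤ) * (i:ℤ) = (-((l:ℤ) - (K:ℤ))) * (i:ℤ) := by ring
      rw [this]; exact Dvd.dvd.mul_right (dvd_neg.mpr hd1) _
    rw [if_pos hd1, if_neg hd2, if_pos (dvd_sub_comm.mp hd1),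
      if_neg (fun h => hd2 (by rwa [add_comm] at h)), hKi, Ecol]
    push_cast
    ring
  · have hKi2 : zeta n ^ ((-(K:ℤ)) * (i:ℤ)) = zeta n ^ ((l:ℤ) * (i:ℤ)) := by
      apply zeta_zpow_eq_of_emod hn
      have : (-(K:ℤ)) * (i:ℤ) - (l:ℤ) * (i:ℤ) = (-((l:ℤ) + (K:ℤ))) * (i:ℤ) := by ring
      rw [this]; exact Dvd.dvd.mul_right (dvd_neg.mpr hd2) _
    rw [if_neg hd1, if_pos hd2, if_neg (fun h => hd1 (dvd_sub_comm.mp h)),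
      if_pos (by rwa [add_comm]), hKi2, Ecol]
    push_cast
    ring
  · rw [if_neg hd1, if_neg hd2, if_neg (fun h => hd1 (dvd_sub_comm.mp h)),
      if_neg (fun h => hd2 (by rwa [add_comm] at h))]
    push_cast
    ring

lemma summable_term {s : ℝ} (hs : 1 < s) (i i' : Fin n) (l : Fin n) :
    Summable (fun kk : ℕ =>
      ((Real.cos (2 * π * (kk + 1) * ((((i : ℤ) - (i' : ℤ)) % (n : ℤ)).toNat : ℝ) / n) /
        (2 * π * (kk + 1)) ^ s : ℝ) : ℂ) * Ecol n l i') := by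
  apply Summable.of_norm
  apply Summable.of_nonneg_of_le (fun kk => norm_nonneg _) _ (summable_alpha hs)
  intro kk
  rw [norm_mul]
  have h1 : ‖Ecol n l i'‖ = 1 := norm_zeta_zpow _
  rw [h1, mul_one, Complex.norm_real, Real.norm_eq_abs, abs_div]
  have hb : (0:ℝ) < (2 * π * ((kk:ℝ) + 1)) ^ s := rpow_pos_of_pos (by positivity) _
  rw [abs_of_pos hb, div_le_iff₀ hb]
  rw [inv_mul_cancel₀ hb.ne']
  exact Real.abs_cos_le_one _

lemma indw_nonneg (l : Fin n) (K : ℕ) : 0 ≤ indw n l K := by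
  rw [indw]; positivity

lemma indw_le_two (l : Fin n) (K : ℕ) : indw n l K ≤ 2 := by
  rw [indw]
  split_ifs <;> norm_num

lemma summable_eig {s : ℝ} (hs : 1 < s) (l : Fin n) :
    Summable (fun kk : ℕ => ((2 * π * (kk + 1)) ^ s)⁻¹ * indw n l (kk + 1)) := by
  apply Summable.of_nonneg_of_le
    (fun kk => mul_nonneg (by positivity) (indw_nonneg l _))
    (fun kk => ?_) ((summable_alpha hs).mul_left 2)
  have hb : (0:ℝ) ≤ ((2 * π * ((kk:ℝ) + 1)) ^ s)⁻¹ := by positivity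
  calc ((2 * π * ((kk:ℝ) + 1)) ^ s)⁻¹ * indw n l (kk + 1)
      ≤ ((2 * π * ((kk:ℝ) + 1)) ^ s)⁻¹ * 2 := by
        exact mul_le_mul_of_nonneg_left (indw_le_two l _) hb
    _ = 2 * ((2 * π * ((kk:ℝ) + 1)) ^ s)⁻¹ := by ring

lemma Kmat_map_mulVec (hn : 0 < n) {s : ℝ} (hs : 1 < s) (l : Fin n) :
    (Kmat s n).map Complex.ofReal *ᵥ Ecol n l = ((eigval s n l : ℝ) : ℂ) • Ecol n l := by
  funext i
  have hn' : ((n:ℝ):ℂ) ≠ 0 := by exact_mod_cast (Nat.cast_ne_zero (R := ℝ)).2 hn.ne'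
  have expand : ((Kmat s n).map Complex.ofReal *ᵥ Ecol n l) i
      = ∑ i' : Fin n, ((Kmat s n i i' : ℝ) : ℂ) * Ecol n l i' := by
    simp [Matrix.mulVec, Matrix.map_apply, dotProduct]
  rw [expand]
  have step1 : ∀ i' : Fin n, ((Kmat s n i i' : ℝ) : ℂ) * Ecol n l i'
      = (2 / (n:ℂ)) * ∑' kk : ℕ,
        ((Real.cos (2 * π * (kk + 1) * ((((i : ℤ) - (i' : ℤ)) % (n : ℤ)).toNat : ℝ) / n) /
          (2 * π * (kk + 1)) ^ s : ℝ) : ℂ) * Ecol n l i' := by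
    intro i'
    rw [Kmat]
    push_cast [Complex.ofReal_tsum]
    rw [mul_assoc, ← tsum_mul_right]
  simp_rw [step1]
  rw [← Finset.mul_sum, ← Summable.tsum_finsetSum (fun i' _ => summable_term hs i i' l)]
  have step2 : ∀ kk : ℕ, (∑ i' : Fin n,
      ((Real.cos (2 * π * (kk + 1) * ((((i : ℤ) - (i' : ℤ)) % (n : ℤ)).toNat : ℝ) / n) /
        (2 * π * (kk + 1)) ^ s : ℝ) : ℂ) * Ecol n l i')
      = (((((2 * π * (kk + 1)) ^ s)⁻¹ * indw n l (kk + 1) : ℝ)) : ℂ) * ((n / 2 : ℂ) * Ecol n l i) := by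
    intro kk
    have hc : ∀ i' : Fin n,
        ((Real.cos (2 * π * (kk + 1) * ((((i : ℤ) - (i' : ℤ)) % (n : ℤ)).toNat : ℝ) / n) /
          (2 * π * (kk + 1)) ^ s : ℝ) : ℂ)
        = ((Real.cos (2 * π * ((kk+1 : ℕ):ℝ) * ((((i : ℤ) - (i' : ℤ)) % (n : ℤ)).toNat : ℝ) / n) : ℝ) : ℂ)
          * ((((2 * π * (kk + 1)) ^ s : ℝ))⁻¹ : ℝ) := by
      intro i'
      push_cast
      rw [div_eq_mul_inv]
    calc (∑ i' : Fin n,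
        ((Real.cos (2 * π * (kk + 1) * ((((i : ℤ) - (i' : ℤ)) % (n : ℤ)).toNat : ℝ) / n) /
          (2 * π * (kk + 1)) ^ s : ℝ) : ℂ) * Ecol n l i')
        = (∑ i' : Fin n,
            ((Real.cos (2 * π * ((kk+1 : ℕ):ℝ) * ((((i : ℤ) - (i' : ℤ)) % (n : ℤ)).toNat : ℝ) / n) : ℝ) : ℂ)
              * Ecol n l i') * ((((2 * π * (kk + 1)) ^ s : ℝ))⁻¹ : ℂ) := by
          rw [Finset.sum_mul]
          exact Finset.sum_congr rfl (fun i' _ => by rw [hc i', Complex.ofReal_inv]; ring)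
      _ = _ := by
          rw [sum_cos_mul_E hn (kk+1) l i]
          push_cast
          ring
  simp_rw [step2]
  rw [tsum_mul_right, ← Complex.ofReal_tsum]
  show (2 / (n:ℂ)) * (((eigval s n l : ℝ):ℂ) * ((n/2 :ℂ) * Ecol n l i)) = _
  rw [Pi.smul_apply, smul_eq_mul]
  have hne : (n:ℂ) ≠ 0 := Nat.cast_ne_zero.2 hn.ne'
  field_simp

def Emat (n : ℕ) : Matrix (Fin n) (Fin n) ℂ := Matrix.of fun i l => Ecol n l i

lemma dvd_fin_iff (i i' : Fin n) : (n:ℤ) ∣ (i:ℤ) - (i':ℤ) ↔ i = i' := by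
  constructor
  · intro h
    by_contra hne
    have hd : (i:ℤ) - (i':ℤ) ≠ 0 := by
      intro hz
      apply hne
      have : (i:ℤ) = (i':ℤ) := by omega
      exact Fin.ext (by exact_mod_cast this)
    have h1 : (n:ℤ) ≤ |(i:ℤ) - (i':ℤ)| := Int.le_of_dvd (abs_pos.2 hd) ((dvd_abs _ _).2 h)
    have hb1 : (i:ℤ) < n := by exact_mod_cast i.isLt
    have hb2 : (i':ℤ) < n := by exact_mod_cast i'.isLt
    have hb3 : 0 ≤ (i:ℤ) := by positivity
    have hb4 : 0 ≤ (i':ℤ) := by positivity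
    have h2 : |(i:ℤ) - (i':ℤ)| < n := abs_lt.mpr ⟨by omega, by omega⟩
    linarith
  · rintro rfl
    simp

lemma conj_zeta_zpow (a : ℤ) : (starRingEnd ℂ) (zeta n ^ a) = zeta n ^ (-a) := by
  rw [map_zpow₀, zeta, ← Complex.exp_conj]
  have : (starRingEnd ℂ) (2 * π * Complex.I / n) = -(2 * π * Complex.I / n) := by
    have h2 : (starRingEnd ℂ) (2:ℂ) = 2 := by
      rw [show ((2:ℂ)) = ((2:ℝ):ℂ) by norm_num, Complex.conj_ofReal]
    simp [map_div₀, h2]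
    ring
  rw [this, Complex.exp_neg, _root_.inv_zpow, _root_.zpow_neg]

lemma Emat_mul_conjTranspose (hn : 0 < n) : Emat n * (Emat n)ᴴ = (n:ℂ) • 1 := by
  ext i i'
  simp only [Matrix.mul_apply, Matrix.conjTranspose_apply, Emat, Matrix.of_apply, Ecol,
    Matrix.smul_apply, Matrix.one_apply]
  have hterm : ∀ l : Fin n, zeta n ^ ((l:ℤ) * (i:ℤ)) * star (zeta n ^ ((l:ℤ) * (i':ℤ)))
      = zeta n ^ (((i:ℤ) - (i':ℤ)) * ((l:ℕ):ℤ)) := by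
    intro l
    rw [show star (zeta n ^ ((l:ℤ) * (i':ℤ))) = (starRingEnd ℂ) (zeta n ^ ((l:ℤ) * (i':ℤ))) from rfl,
      conj_zeta_zpow, ← zpow_add₀ zeta_ne_zero]
    congr 1
    push_cast
    ring
  simp_rw [hterm]
  rw [sum_zeta_pow hn ((i:ℤ) - (i':ℤ))]
  by_cases h : i = i'
  · rw [if_pos ((dvd_fin_iff i i').2 h), if_pos h, smul_eq_mul, mul_one]
  · rw [if_neg (fun hd => h ((dvd_fin_iff i i').1 hd)), if_neg h, smul_eq_mul, mul_zero]

def EmatInv (n : ℕ) : Matrix (Fin n) (Fin n) ℂ := ((n:ℂ))⁻¹ • (Emat n)ᴴ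

lemma Emat_mul_inv (hn : 0 < n) : Emat n * EmatInv n = 1 := by
  have hne : (n:ℂ) ≠ 0 := Nat.cast_ne_zero.2 hn.ne'
  rw [EmatInv, Matrix.mul_smul, Emat_mul_conjTranspose hn, smul_smul,
    inv_mul_cancel₀ hne, one_smul]

lemma Emat_inv_eq (hn : 0 < n) : (Emat n)⁻¹ = EmatInv n :=
  inv_eq_right_inv (Emat_mul_inv hn)

lemma Emat_isUnit (hn : 0 < n) : IsUnit (Emat n) := by
  have := invertibleOfRightInverse _ _ (Emat_mul_inv hn)
  exact isUnit_of_invertible _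

lemma Emat_mul_nonsing_inv (hn : 0 < n) : Emat n * (Emat n)⁻¹ = 1 := by
  rw [Emat_inv_eq hn]; exact Emat_mul_inv hn

lemma Emat_nonsing_inv_mul (hn : 0 < n) : (Emat n)⁻¹ * Emat n = 1 :=
  Matrix.nonsing_inv_mul _ ((Matrix.isUnit_iff_isUnit_det _).1 (Emat_isUnit hn))

/-- conjugated diagonal products -/
lemma conjdiag_mul (hn : 0 < n) (d e : Fin n → ℂ) :
    (Emat n * Matrix.diagonal d * (Emat n)⁻¹) * (Emat n * Matrix.diagonal e * (Emat n)⁻¹)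
      = Emat n * Matrix.diagonal (fun l => d l * e l) * (Emat n)⁻¹ := by
  have h1 : Matrix.diagonal d * Matrix.diagonal e = Matrix.diagonal (fun l => d l * e l) :=
    Matrix.diagonal_mul_diagonal _ _
  calc (Emat n * Matrix.diagonal d * (Emat n)⁻¹) * (Emat n * Matrix.diagonal e * (Emat n)⁻¹)
      = Emat n * Matrix.diagonal d * ((Emat n)⁻¹ * Emat n) * Matrix.diagonal e * (Emat n)⁻¹ := by
        simp only [Matrix.mul_assoc]
    _ = Emat n * Matrix.diagonal (fun l => d l * e l) * (Emat n)⁻¹ := by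
        rw [Emat_nonsing_inv_mul hn, Matrix.mul_one, ← h1]
        simp only [Matrix.mul_assoc]

lemma conjdiag_inv (hn : 0 < n) (d : Fin n → ℂ) (hd : ∀ l, d l ≠ 0) :
    (Emat n * Matrix.diagonal d * (Emat n)⁻¹)⁻¹
      = Emat n * Matrix.diagonal (fun l => (d l)⁻¹) * (Emat n)⁻¹ := by
  apply inv_eq_right_inv
  rw [conjdiag_mul hn]
  have : (fun l => d l * (d l)⁻¹) = fun _ => (1:ℂ) := funext fun l => mul_inv_cancel₀ (hd l)
  rw [this, Matrix.diagonal_one, Matrix.mul_one, Emat_mul_nonsing_inv hn]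

lemma conjdiag_isUnit (hn : 0 < n) (d : Fin n → ℂ) (hd : ∀ l, d l ≠ 0) :
    IsUnit (Emat n * Matrix.diagonal d * (Emat n)⁻¹) := by
  have hri : (Emat n * Matrix.diagonal d * (Emat n)⁻¹)
      * (Emat n * Matrix.diagonal (fun l => (d l)⁻¹) * (Emat n)⁻¹) = 1 := by
    rw [conjdiag_mul hn]
    have : (fun l => d l * (d l)⁻¹) = fun _ => (1:ℂ) := funext fun l => mul_inv_cancel₀ (hd l)
    rw [this, Matrix.diagonal_one, Matrix.mul_one, Emat_mul_nonsing_inv hn]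
  have := invertibleOfRightInverse _ _ hri
  exact isUnit_of_invertible _

lemma quad_eval (hn : 0 < n) (w : Fin n → ℂ) (r : Fin n → ℝ) :
    (fun i => ((r i : ℝ) : ℂ)) ⬝ᵥ ((Emat n * Matrix.diagonal w * (Emat n)⁻¹) *ᵥ fun i => ((r i : ℝ) : ℂ))
      = (n:ℂ)⁻¹ * ∑ l : Fin n, w l *
          (((Emat n)ᴴ *ᵥ fun i => ((r i : ℝ):ℂ)) l * star (((Emat n)ᴴ *ᵥ fun i => ((r i : ℝ):ℂ)) l)) := by
  set rc : Fin n → ℂ := fun i => ((r i : ℝ) : ℂ) with hrc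
  set sv : Fin n → ℂ := (Emat n)ᴴ *ᵥ rc with hsv
  have h1 : (Emat n * Matrix.diagonal w * (Emat n)⁻¹) *ᵥ rc
      = (Emat n * Matrix.diagonal w) *ᵥ ((n:ℂ)⁻¹ • sv) := by
    rw [Emat_inv_eq hn, EmatInv, ← Matrix.mulVec_mulVec, Matrix.smul_mulVec]
  rw [h1, Matrix.dotProduct_mulVec, ← Matrix.vecMul_vecMul]
  have h2 : Matrix.vecMul rc (Emat n) = fun l => star (sv l) := by
    funext l
    simp only [hsv, Matrix.vecMul, Matrix.mulVec, dotProduct, Matrix.conjTranspose_apply,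
      star_sum, star_mul', star_star, hrc]
    exact Finset.sum_congr rfl fun i _ => by
      rw [Complex.star_def, Complex.conj_ofReal, mul_comm]
  rw [h2]
  have h3 : Matrix.vecMul (fun l => star (sv l)) (Matrix.diagonal w)
      = fun l => star (sv l) * w l := by
    funext l
    rw [Matrix.vecMul_diagonal]
  rw [h3]
  rw [dotProduct_smul]
  simp only [dotProduct, smul_eq_mul, Finset.mul_sum]
  exact Finset.sum_congr rfl fun l _ => by ring


lemma eigval_nonneg (s : ℝ) (l : Fin n) : 0 ≤ eigval s n l :=
  tsum_nonneg fun kk => mul_nonneg (by positivity) (indw_nonneg l _)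

lemma eigval_sq_le {m : ℝ} (hm : 1/2 < m) (l : Fin n) :
    eigval (4*m) n l ≤ (eigval (2*m) n l)^2 := by
  have hs2 : 1 < 2*m := by linarith
  have hs4 : 1 < 4*m := by linarith
  set g : ℕ → ℝ := fun kk => ((2*π*((kk:ℝ)+1))^(2*m))⁻¹ * indw n l (kk+1) with hg
  have hgsum : Summable g := summable_eig hs2 l
  have hgnn : ∀ kk, 0 ≤ g kk := fun kk => mul_nonneg (by positivity) (indw_nonneg l _)
  have hterm : ∀ kk : ℕ, ((2*π*((kk:ℝ)+1))^(4*m))⁻¹ * indw n l (kk+1) ≤ g kk ^ 2 := by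
    intro kk
    have hb : (0:ℝ) < 2*π*((kk:ℝ)+1) := by positivity
    have h4 : (2*π*((kk:ℝ)+1))^(4*m) = ((2*π*((kk:ℝ)+1))^(2*m))^2 := by
      rw [← Real.rpow_natCast ((2*π*((kk:ℝ)+1))^(2*m)) 2, ← Real.rpow_mul hb.le]
      norm_num
      ring_nf
    have hind : indw n l (kk+1) ≤ (indw n l (kk+1))^2 := by
      rw [indw]; split_ifs <;> norm_num
    rw [h4]
    calc (((2*π*((kk:ℝ)+1))^(2*m))^2)⁻¹ * indw n l (kk+1)
        ≤ (((2*π*((kk:ℝ)+1))^(2*m))^2)⁻¹ * (indw n l (kk+1))^2 :=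
          mul_le_mul_of_nonneg_left hind (by positivity)
      _ = g kk ^ 2 := by rw [hg, mul_pow, inv_pow]
  have hgsqle : ∀ kk, g kk ^ 2 ≤ (∑' j, g j) * g kk := by
    intro kk
    have hle : g kk ≤ ∑' j, g j := Summable.le_tsum hgsum kk (fun j _ => hgnn j)
    calc g kk ^ 2 = g kk * g kk := sq (g kk)
      _ ≤ (∑' j, g j) * g kk := mul_le_mul_of_nonneg_right hle (hgnn kk)
  have hgsq : Summable (fun kk => g kk ^ 2) :=
    Summable.of_nonneg_of_le (fun kk => sq_nonneg _) hgsqle (hgsum.mul_left _)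
  have h1 : eigval (4*m) n l ≤ ∑' kk, g kk ^ 2 :=
    Summable.tsum_le_tsum hterm (summable_eig hs4 l) hgsq
  have h2 : (∑' kk, g kk ^ 2) ≤ (eigval (2*m) n l)^2 := by
    calc (∑' kk, g kk ^ 2) ≤ ∑' kk, (∑' j, g j) * g kk :=
          Summable.tsum_le_tsum hgsqle hgsq (hgsum.mul_left _)
      _ = (∑' j, g j) * ∑' kk, g kk := tsum_mul_left
      _ = (eigval (2*m) n l)^2 := (sq _).symm
  exact h1.trans h2



lemma Kmat_map_eq (hn : 0 < n) {s : ℝ} (hs : 1 < s) :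
    (Kmat s n).map Complex.ofReal
      = Emat n * Matrix.diagonal (fun l => ((eigval s n l : ℝ) : ℂ)) * (Emat n)⁻¹ := by
  have hKE : (Kmat s n).map Complex.ofReal * Emat n
      = Emat n * Matrix.diagonal (fun l => ((eigval s n l : ℝ) : ℂ)) := by
    ext i l
    have h := congrFun (Kmat_map_mulVec hn hs l) i
    simp only [Matrix.mulVec, dotProduct, Pi.smul_apply, smul_eq_mul] at h
    rw [Matrix.mul_apply, Matrix.mul_diagonal]
    calc ∑ j : Fin n, (Kmat s n).map Complex.ofReal i j * Emat n j l
        = ∑ j : Fin n, (Kmat s n).map Complex.ofReal i j * Ecol n l j := rfl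
      _ = ((eigval s n l : ℝ) : ℂ) * Ecol n l i := h
      _ = Emat n i l * ((eigval s n l : ℝ) : ℂ) := by
          rw [mul_comm]; rfl
  calc (Kmat s n).map Complex.ofReal
      = (Kmat s n).map Complex.ofReal * (Emat n * (Emat n)⁻¹) := by
        rw [Emat_mul_nonsing_inv hn, Matrix.mul_one]
    _ = (Kmat s n).map Complex.ofReal * Emat n * (Emat n)⁻¹ := by
        rw [Matrix.mul_assoc]
    _ = _ := by rw [hKE]

lemma conjdiag_add (d e : Fin n → ℂ) :
    (Emat n * Matrix.diagonal d * (Emat n)⁻¹) + (Emat n * Matrix.diagonal e * (Emat n)⁻¹)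
      = Emat n * Matrix.diagonal (fun l => d l + e l) * (Emat n)⁻¹ := by
  have : Matrix.diagonal (fun l => d l + e l) = Matrix.diagonal d + Matrix.diagonal e := by
    rw [← Matrix.diagonal_add]
  rw [this, Matrix.mul_add, Matrix.add_mul]

lemma smul_one_conjdiag (hn : 0 < n) (c : ℂ) :
    c • (1 : Matrix (Fin n) (Fin n) ℂ)
      = Emat n * Matrix.diagonal (fun _ => c) * (Emat n)⁻¹ := by
  have h1 : Matrix.diagonal (fun _ : Fin n => c) = c • (1 : Matrix (Fin n) (Fin n) ℂ) := by
    ext i j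
    by_cases h : i = j <;> simp [Matrix.diagonal_apply, h, Matrix.one_apply]
  rw [h1, Matrix.mul_smul, Matrix.mul_one, Matrix.smul_mul, Emat_mul_nonsing_inv hn]

lemma smul_one_map (c : ℝ) :
    ((c • (1 : Matrix (Fin n) (Fin n) ℝ)).map Complex.ofReal)
      = (c : ℂ) • (1 : Matrix (Fin n) (Fin n) ℂ) := by
  ext i j
  simp only [Matrix.map_apply, Matrix.smul_apply, Matrix.one_apply, smul_eq_mul]
  split_ifs <;> simp

lemma dot_map (M : Matrix (Fin n) (Fin n) ℝ) (r : Fin n → ℝ) :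
    ((r ⬝ᵥ (M *ᵥ r) : ℝ) : ℂ)
      = (fun i => ((r i : ℝ) : ℂ)) ⬝ᵥ (M.map Complex.ofReal *ᵥ fun i => ((r i : ℝ) : ℂ)) := by
  simp only [dotProduct, Matrix.mulVec, Matrix.map_apply]
  push_cast
  rfl


lemma cell_disjoint {k : ℕ} (hk : 2 ≤ k) {t : ℕ → ℝ}
    (ht : StrictMonoOn t (Set.Icc 1 (k - 1))) {j j' : ℕ} (hj1 : 1 ≤ j) (hj' : j < j')
    (hj'k : j' ≤ k) {x : ℝ} (hx : x ∈ cell k t j) (hx' : x ∈ cell k t j') : False := by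
  have hjk1 : j ≤ k - 1 := by omega
  have hxle : x ≤ t j := by
    rw [cell] at hx
    split_ifs at hx with h1 h2
    · rw [h1]; exact hx
    · omega
    · exact hx.2
  have hxgt : t (j' - 1) < x := by
    rw [cell] at hx'
    split_ifs at hx' with h1 h2
    · omega
    · rw [h2]; exact hx'
    · exact hx'.1
  have hmono : t j ≤ t (j' - 1) := by
    rcases eq_or_lt_of_le (show j ≤ j' - 1 by omega) with h | h
    · rw [h]
    · exact le_of_lt (ht ⟨by exact_mod_cast hj1, by exact_mod_cast hjk1⟩
        ⟨by omega, by omega⟩ h)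
  linarith

lemma cell_exists_unique {k : ℕ} (hk : 2 ≤ k) {t : ℕ → ℝ}
    (ht : StrictMonoOn t (Set.Icc 1 (k - 1))) (x : ℝ) :
    ∃ j₀ ∈ Finset.Icc 1 k, x ∈ cell k t j₀ ∧
      ∀ j ∈ Finset.Icc 1 k, j ≠ j₀ → x ∉ cell k t j := by
  have huniq : ∀ j₀ ∈ Finset.Icc 1 k, x ∈ cell k t j₀ →
      ∀ j ∈ Finset.Icc 1 k, j ≠ j₀ → x ∉ cell k t j := by
    intro j₀ hj₀ hmem j hj hne hmemj
    rw [Finset.mem_Icc] at hj₀ hj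
    rcases lt_or_gt_of_ne hne with h | h
    · exact cell_disjoint hk ht hj.1 h hj₀.2 hmemj hmem
    · exact cell_disjoint hk ht hj₀.1 h hj.2 hmem hmemj
  by_cases hx1 : x ≤ t 1
  · refine ⟨1, ?_, ?_, huniq 1 ?_ ?_⟩
    · rw [Finset.mem_Icc]; omega
    · rw [cell, if_pos rfl]; exact hx1
    · rw [Finset.mem_Icc]; omega
    · rw [cell, if_pos rfl]; exact hx1
  · by_cases hxk : t (k-1) < x
    · refine ⟨k, ?_, ?_, huniq k ?_ ?_⟩
      · rw [Finset.mem_Icc]; omega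
      · rw [cell, if_neg (by omega), if_pos rfl]; exact hxk
      · rw [Finset.mem_Icc]; omega
      · rw [cell, if_neg (by omega), if_pos rfl]; exact hxk
    · push_neg at hx1 hxk
      set S := (Finset.Icc 1 (k-1)).filter (fun j => x ≤ t j) with hS
      have hSne : (k-1) ∈ S := by
        rw [hS, Finset.mem_filter, Finset.mem_Icc]
        exact ⟨⟨by omega, le_refl _⟩, hxk⟩
      set j₀ := S.min' ⟨_, hSne⟩ with hj₀def
      have hj₀S : j₀ ∈ S := Finset.min'_mem _ _
      rw [hS, Finset.mem_filter, Finset.mem_Icc] at hj₀S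
      have h2le : 2 ≤ j₀ := by
        rcases Nat.lt_or_ge j₀ 2 with h | h
        · exfalso
          have : j₀ = 1 := by omega
          rw [this] at hj₀S
          linarith [hj₀S.2]
        · exact h
      have hlt : t (j₀ - 1) < x := by
        by_contra hcon
        push_neg at hcon
        have hmemS : (j₀ - 1) ∈ S := by
          rw [hS, Finset.mem_filter, Finset.mem_Icc]
          exact ⟨⟨by omega, by omega⟩, hcon⟩
        have := Finset.min'_le S _ hmemS
        omega
      have hmem : x ∈ cell k t j₀ := by
        rw [cell, if_neg (by omega), if_neg (by omega)]
        exact ⟨hlt, hj₀S.2⟩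
      refine ⟨j₀, ?_, hmem, huniq j₀ ?_ hmem⟩
      · rw [Finset.mem_Icc]; omega
      · rw [Finset.mem_Icc]; omega

lemma quantizer_err {k : ℕ} (hk : 2 ≤ k) {t : ℕ → ℝ}
    (ht : StrictMonoOn t (Set.Icc 1 (k - 1))) (μ : ℕ → ℝ) (x : ℝ) :
    ∑ j ∈ Finset.Icc 1 k, (μ j - x)^2 * Set.indicator (cell k t j) (fun _ => 1) x
      = (quantizer k t μ x - x)^2 := by
  obtain ⟨j₀, hj₀, hmem, huniq⟩ := cell_exists_unique hk ht x
  have hq : quantizer k t μ x = μ j₀ := by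
    rw [quantizer, Finset.sum_eq_single j₀]
    · rw [Set.indicator_of_mem hmem, mul_one]
    · intro j hj hne
      rw [Set.indicator_of_notMem (huniq j hj hne), mul_zero]
    · intro h; exact absurd hj₀ h
  rw [hq, Finset.sum_eq_single j₀]
  · rw [Set.indicator_of_mem hmem, mul_one]
  · intro j hj hne
    rw [Set.indicator_of_notMem (huniq j hj hne), mul_zero]
  · intro h; exact absurd hj₀ h


lemma map_add' (A B : Matrix (Fin n) (Fin n) ℝ) :
    (A + B).map Complex.ofReal = A.map Complex.ofReal + B.map Complex.ofReal := by
  ext i j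
  simp [Matrix.map_apply]

lemma map_mul' (A B : Matrix (Fin n) (Fin n) ℝ) :
    (A * B).map Complex.ofReal = A.map Complex.ofReal * B.map Complex.ofReal := by
  ext i j
  simp only [Matrix.map_apply, Matrix.mul_apply, Complex.ofReal_sum]
  exact Finset.sum_congr rfl fun l _ => by push_cast; rfl

lemma map_one' : (1 : Matrix (Fin n) (Fin n) ℝ).map Complex.ofReal = 1 := by
  ext i j
  simp only [Matrix.map_apply, Matrix.one_apply]
  split_ifs <;> simp

end QQFB

/-- Theorem 1 (matrix form): `Σ + λI` is invertible and the quadratic form of `z - y` in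
`(Σ + λI)⁻¹ Ω (Σ + λI)⁻¹` is bounded by the total quantization error. -/
theorem quantization_quadratic_form_bound
    (m : ℝ) (hm : 1 / 2 < m) (n : ℕ) (hn : 1 ≤ n) (lam : ℝ) (hlam : 0 < lam)
    (k : ℕ) (hk : 2 ≤ k) (t μ : ℕ → ℝ)
    (ht : StrictMonoOn t (Set.Icc 1 (k - 1)))
    (y : Fin n → ℝ) :
    IsUnit (SigmaMat m n + lam • (1 : Matrix (Fin n) (Fin n) ℝ)) ∧
    (fun i => quantizer k t μ (y i) - y i) ⬝ᵥ
      (((SigmaMat m n + lam • 1)⁻¹ * OmegaMat m n * (SigmaMat m n + lam • 1)⁻¹) *ᵥ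
        fun i => quantizer k t μ (y i) - y i) ≤
      ∑ j ∈ Finset.Icc 1 k, ∑ i : Fin n,
        (μ j - y i) ^ 2 * Set.indicator (cell k t j) (fun _ => 1) (y i) := by
  have hn0 : 0 < n := hn
  have h2m : 1 < 2*m := by linarith
  have h4m : 1 < 4*m := by linarith
  set N : Matrix (Fin n) (Fin n) ℝ := SigmaMat m n + lam • 1 with hN
  set r : Fin n → ℝ := fun i => quantizer k t μ (y i) - y i with hr
  set d : Fin n → ℝ := fun l => QQFB.eigval (2*m) n l + lam with hd
  have hdpos : ∀ l, 0 < d l := fun l =>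
    add_pos_of_nonneg_of_pos (QQFB.eigval_nonneg _ l) hlam
  have hdC : ∀ l, ((d l : ℝ) : ℂ) ≠ 0 := fun l => Complex.ofReal_ne_zero.2 (hdpos l).ne'
  have hSig : SigmaMat m n = QQFB.Kmat (2*m) n := rfl
  have hOm : OmegaMat m n = QQFB.Kmat (4*m) n := rfl
  have hNmap : N.map Complex.ofReal
      = QQFB.Emat n * Matrix.diagonal (fun l => ((d l : ℝ) : ℂ)) * (QQFB.Emat n)⁻¹ := by
    rw [hN, QQFB.map_add', hSig, QQFB.Kmat_map_eq hn0 h2m, QQFB.smul_one_map,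
      QQFB.smul_one_conjdiag hn0, QQFB.conjdiag_add]
    have heq : (fun l : Fin n => ((QQFB.eigval (2*m) n l : ℝ):ℂ) + ((lam : ℝ):ℂ))
        = fun l : Fin n => ((d l : ℝ):ℂ) := by
      funext l
      rw [hd]
      push_cast
      rfl
    rw [heq]
  have hNcUnit : IsUnit (N.map Complex.ofReal) := by
    rw [hNmap]; exact QQFB.conjdiag_isUnit hn0 _ hdC
  have hdet : ((N.det : ℝ) : ℂ) = (N.map Complex.ofReal).det := by
    have := RingHom.map_det Complex.ofRealHom N
    exact this
  have hdetne : N.det ≠ 0 := by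
    intro h
    have h2 : (N.map Complex.ofReal).det = 0 := by rw [← hdet, h, Complex.ofReal_zero]
    exact (isUnit_iff_ne_zero.1 ((Matrix.isUnit_iff_isUnit_det _).1 hNcUnit)) h2
  have hUnitN : IsUnit N := (Matrix.isUnit_iff_isUnit_det N).2 (isUnit_iff_ne_zero.2 hdetne)
  have hNinvmap : (N⁻¹).map Complex.ofReal = (N.map Complex.ofReal)⁻¹ := by
    symm
    apply inv_eq_right_inv
    rw [← QQFB.map_mul', Matrix.mul_nonsing_inv N (isUnit_iff_ne_zero.2 hdetne), QQFB.map_one']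
  have hNinv_eq : (N⁻¹).map Complex.ofReal
      = QQFB.Emat n * Matrix.diagonal (fun l => (((d l)⁻¹ : ℝ) : ℂ)) * (QQFB.Emat n)⁻¹ := by
    rw [hNinvmap, hNmap, QQFB.conjdiag_inv hn0 _ hdC]
    congr 1
    funext l
    push_cast
    rfl
  set w : Fin n → ℝ := fun l => (d l)⁻¹ * QQFB.eigval (4*m) n l * (d l)⁻¹ with hw
  have hMc : ((N⁻¹ * OmegaMat m n * N⁻¹).map Complex.ofReal)
      = QQFB.Emat n * Matrix.diagonal (fun l => ((w l : ℝ) : ℂ)) * (QQFB.Emat n)⁻¹ := by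
    rw [QQFB.map_mul', QQFB.map_mul', hNinv_eq, hOm, QQFB.Kmat_map_eq hn0 h4m,
      QQFB.conjdiag_mul hn0, QQFB.conjdiag_mul hn0]
    refine congrArg (· * (QQFB.Emat n)⁻¹)
      (congrArg (QQFB.Emat n * ·) (congrArg Matrix.diagonal (funext fun l => ?_)))
    simp only [hw]
    push_cast
    ring
  set sv : Fin n → ℂ := (QQFB.Emat n)ᴴ *ᵥ (fun i => ((r i : ℝ) : ℂ)) with hsv
  set P : Fin n → ℝ := fun l => Complex.normSq (sv l) with hP
  have hcast : ∀ u : Fin n → ℝ,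
      ((n:ℂ)⁻¹ * ∑ l : Fin n, ((u l : ℝ) : ℂ) * (sv l * star (sv l)))
        = (((( (n:ℝ))⁻¹ * ∑ l : Fin n, u l * P l : ℝ)) : ℂ) := by
    intro u
    rw [Complex.ofReal_mul, Complex.ofReal_inv, Complex.ofReal_natCast, Complex.ofReal_sum]
    congr 1
    apply Finset.sum_congr rfl
    intro l _
    rw [Complex.ofReal_mul]
    congr 1
    simp only [hP]
    rw [← Complex.mul_conj]
    rfl
  have hX : (r ⬝ᵥ ((N⁻¹ * OmegaMat m n * N⁻¹) *ᵥ r) : ℝ)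
      = (n:ℝ)⁻¹ * ∑ l : Fin n, w l * P l := by
    apply Complex.ofReal_injective
    rw [QQFB.dot_map, hMc, QQFB.quad_eval hn0, hcast w]
  have hrr : (r ⬝ᵥ r : ℝ) = (n:ℝ)⁻¹ * ∑ l : Fin n, P l := by
    apply Complex.ofReal_injective
    have h0 : (r ⬝ᵥ r : ℝ) = r ⬝ᵥ ((1 : Matrix (Fin n) (Fin n) ℝ) *ᵥ r) := by
      rw [Matrix.one_mulVec]
    have hid : (1 : Matrix (Fin n) (Fin n) ℝ).map Complex.ofReal
        = QQFB.Emat n * Matrix.diagonal (fun _ : Fin n => ((1:ℝ):ℂ)) * (QQFB.Emat n)⁻¹ := by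
      rw [QQFB.map_one']
      have := QQFB.smul_one_conjdiag hn0 (1:ℂ)
      rw [one_smul] at this
      rw [this]
      congr 1
    rw [h0, QQFB.dot_map, hid, QQFB.quad_eval hn0, hcast (fun _ => 1)]
    simp
  have hwle : ∀ l, w l ≤ 1 := by
    intro l
    have h1 : QQFB.eigval (4*m) n l ≤ (QQFB.eigval (2*m) n l)^2 := QQFB.eigval_sq_le hm l
    have h2 : (QQFB.eigval (2*m) n l)^2 ≤ (d l)^2 := by
      apply pow_le_pow_left₀ (QQFB.eigval_nonneg _ l)
      rw [hd]
      simp only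
      linarith
    have h3 : QQFB.eigval (4*m) n l ≤ (d l)^2 := h1.trans h2
    have hdp := hdpos l
    rw [hw]
    simp only
    rw [mul_comm, ← mul_assoc]
    have : (d l)⁻¹ * (d l)⁻¹ * QQFB.eigval (4*m) n l ≤ (d l)⁻¹ * (d l)⁻¹ * (d l)^2 := by
      apply mul_le_mul_of_nonneg_left h3 (by positivity)
    calc (d l)⁻¹ * (d l)⁻¹ * QQFB.eigval (4*m) n l
        ≤ (d l)⁻¹ * (d l)⁻¹ * (d l)^2 := this
      _ = 1 := by field_simp
  have hwnn : ∀ l, 0 ≤ w l := by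
    intro l
    have := QQFB.eigval_nonneg (4*m) (n := n) l
    have hdp := hdpos l
    rw [hw]
    positivity
  have hkey : (r ⬝ᵥ ((N⁻¹ * OmegaMat m n * N⁻¹) *ᵥ r) : ℝ) ≤ r ⬝ᵥ r := by
    rw [hX, hrr]
    apply mul_le_mul_of_nonneg_left _ (by positivity)
    apply Finset.sum_le_sum
    intro l _
    have hPnn : 0 ≤ P l := Complex.normSq_nonneg _
    calc w l * P l ≤ 1 * P l := mul_le_mul_of_nonneg_right (hwle l) hPnn
      _ = P l := one_mul _
  refine ⟨hUnitN, ?_⟩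
  calc r ⬝ᵥ ((N⁻¹ * OmegaMat m n * N⁻¹) *ᵥ r) ≤ r ⬝ᵥ r := hkey
    _ = ∑ i : Fin n, (r i)^2 := by
        simp [dotProduct, sq]
    _ = ∑ i : Fin n, ∑ j ∈ Finset.Icc 1 k,
          (μ j - y i)^2 * Set.indicator (cell k t j) (fun _ => 1) (y i) := by
        apply Finset.sum_congr rfl
        intro i _
        rw [QQFB.quantizer_err hk ht μ (y i)]
    _ = ∑ j ∈ Finset.Icc 1 k, ∑ i : Fin n,
          (μ j - y i)^2 * Set.indicator (cell k t j) (fun _ => 1) (y i) :=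
        Finset.sum_comm

end
end

section
/- Let A be a real symmetric n×n matrix and let A₀ = diag(a_{1,1}, …, a_{n,n}) be its diagonal part. Then trace((A − A₀)⁴) ≤ 16 · trace(A⁴). -/
/-!
With `D` the diagonal part of `A`, expand `(A - D)² = A² - AD - DA + D²` and bound each of the
four terms in Frobenius norm by `‖A²‖`; then `trace((A - D)⁴) = ‖(A - D)²‖² ≤ (4‖A²‖)²`,
and `‖A²‖² = trace(A⁴)`.
-/

open Matrix

attribute [local instance] Matrix.frobeniusNormedAddCommGroup

namespace Matrix

variable {m n : Type*} [Fintype m] [Fintype n]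

theorem frobenius_norm_sq_eq_sum_sq (M : Matrix m n ℝ) : ‖M‖ ^ 2 = ∑ i, ∑ j, M i j ^ 2 := by
  rw [frobenius_norm_def, ← Real.rpow_natCast, ← Real.rpow_mul (by positivity)]
  norm_num

theorem trace_mul_transpose_eq_frobenius_norm_sq (M : Matrix m n ℝ) :
    (M * Mᵀ).trace = ‖M‖ ^ 2 := by
  rw [frobenius_norm_sq_eq_sum_sq]
  simp only [trace, diag, mul_apply, transpose_apply, sq]

theorem IsSymm.trace_pow_four_eq_frobenius_norm_sq [DecidableEq n] {A : Matrix n n ℝ}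
    (hA : A.IsSymm) : (A ^ 4).trace = ‖A ^ 2‖ ^ 2 := by
  rw [← trace_mul_transpose_eq_frobenius_norm_sq, (hA.pow 2).eq, ← pow_add]

variable [DecidableEq n]

theorem frobenius_norm_diagonal_diag_le (M : Matrix n n ℝ) : ‖diagonal M.diag‖ ≤ ‖M‖ := by
  rw [← sq_le_sq₀ (norm_nonneg _) (norm_nonneg _), frobenius_norm_sq_eq_sum_sq,
    frobenius_norm_sq_eq_sum_sq]
  refine Finset.sum_le_sum fun i _ => ?_
  simpa [diagonal_apply, ite_pow] using
    Finset.single_le_sum (fun j _ => sq_nonneg (M i j)) (Finset.mem_univ i)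

/-- The `j`-th column of `A * diagonal A.diag` is `A j j` times the `j`-th column `c` of `A`,
and `A j j ^ 2 ≤ ‖c‖² = (Aᵀ * A) j j`. -/
theorem frobenius_norm_mul_diagonal_diag_le (A : Matrix n n ℝ) :
    ‖A * diagonal A.diag‖ ≤ ‖Aᵀ * A‖ := by
  have hcol : ∀ j, (Aᵀ * A) j j = ∑ i, A i j ^ 2 := fun j => by
    simp only [mul_apply, transpose_apply, sq]
  have hdiag_le : ∀ j, A j j ^ 2 ≤ (Aᵀ * A) j j := fun j => by
    rw [hcol]
    exact Finset.single_le_sum (fun i _ => sq_nonneg (A i j)) (Finset.mem_univ j)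
  refine le_trans ?_ (frobenius_norm_diagonal_diag_le _)
  rw [← sq_le_sq₀ (norm_nonneg _) (norm_nonneg _), frobenius_norm_sq_eq_sum_sq,
    frobenius_norm_sq_eq_sum_sq]
  calc ∑ i, ∑ j, (A * diagonal A.diag) i j ^ 2
      = ∑ j, A j j ^ 2 * (Aᵀ * A) j j := by
        simp only [mul_diagonal, diag, mul_pow, hcol, Finset.mul_sum]
        rw [Finset.sum_comm]
        exact Finset.sum_congr rfl fun j _ => Finset.sum_congr rfl fun i _ => mul_comm _ _
    _ ≤ ∑ j, (Aᵀ * A) j j ^ 2 := by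
        refine Finset.sum_le_sum fun j _ => ?_
        rw [sq ((Aᵀ * A) j j)]
        exact mul_le_mul_of_nonneg_right (hdiag_le j) ((sq_nonneg _).trans (hdiag_le j))
    _ = ∑ i, ∑ j, diagonal (Aᵀ * A).diag i j ^ 2 := by
        simp [diagonal_apply, ite_pow]

theorem diagonal_diag_mul_self (A : Matrix n n ℝ) :
    diagonal A.diag * diagonal A.diag = diagonal (A * diagonal A.diag).diag := by
  rw [diagonal_mul_diagonal]
  congr 1
  funext i
  exact (mul_diagonal A.diag A i i).symm

theorem frobenius_norm_sub_sq_le (A D : Matrix n n ℝ) :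
    ‖(A - D) ^ 2‖ ≤ ‖A ^ 2‖ + ‖A * D‖ + ‖D * A‖ + ‖D * D‖ := by
  have hexpand : (A - D) ^ 2 = A ^ 2 - A * D - D * A + D * D := by
    simp only [sq, sub_mul, mul_sub]
    abel
  rw [hexpand]
  linarith [norm_add_le (A ^ 2 - A * D - D * A) (D * D), norm_sub_le (A ^ 2 - A * D) (D * A),
    norm_sub_le (A ^ 2) (A * D)]

end Matrix

/-- For a real symmetric matrix `A` with diagonal part `A₀`,
`trace((A - A₀)⁴) ≤ 16 trace(A⁴)`. -/
theorem trace_offdiag_pow_four_le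
    (n : ℕ) (A : Matrix (Fin n) (Fin n) ℝ) (hA : A.IsSymm) :
    ((A - Matrix.diagonal fun i => A i i) ^ 4).trace ≤ 16 * (A ^ 4).trace := by
  set D : Matrix (Fin n) (Fin n) ℝ := diagonal A.diag
  have hAD : ‖A * D‖ ≤ ‖A ^ 2‖ := by
    simpa only [hA.eq, sq] using frobenius_norm_mul_diagonal_diag_le A
  have hDA : ‖D * A‖ ≤ ‖A ^ 2‖ := by
    rwa [← frobenius_norm_transpose, transpose_mul, hA.eq, diagonal_transpose]
  have hDD : ‖D * D‖ ≤ ‖A ^ 2‖ := by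
    rw [diagonal_diag_mul_self]
    exact (frobenius_norm_diagonal_diag_le _).trans hAD
  have hsq : ‖(A - D) ^ 2‖ ≤ 4 * ‖A ^ 2‖ := by
    linarith [frobenius_norm_sub_sq_le A D]
  change ((A - D) ^ 4).trace ≤ _
  rw [(hA.sub (isSymm_diagonal _)).trace_pow_four_eq_frobenius_norm_sq,
    hA.trace_pow_four_eq_frobenius_norm_sq]
  nlinarith [norm_nonneg ((A - D) ^ 2)]
end

section
/- Let t_1 < t_2 < … < t_{k−1} be real thresholds with k ≥ 3, let C_k(t) = max_{2≤j≤k−1}(t_j − t_{j−1}), and let μ_1, …, μ_k be values of a quantizer Q with μ_j ∈ (t_{j−1}, t_j] for every 2 ≤ j ≤ k−1. If e and f + e are real numbers both lying in (t_1, t_{k−1}], then |Q(f + e) − Q(e) − f| ≤ 2 C_k(t). -/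
open Finset

noncomputable section

/-- Existence of an interior cell containing `y`. -/
lemma exists_cell_index (k : ℕ) (hk : 3 ≤ k) (t : ℕ → ℝ)
    (ht : MonotoneOn t (Set.Icc 1 (k - 1)))
    (y : ℝ) (hy : y ∈ Set.Ioc (t 1) (t (k - 1))) :
    ∃ j, 2 ≤ j ∧ j ≤ k - 1 ∧ y ∈ Set.Ioc (t (j - 1)) (t j) := by
  -- least j in [2, k-1] with y ≤ t j
  have hkk : 2 ≤ k - 1 := by omega
  have hP : ∃ j, (2 ≤ j ∧ j ≤ k - 1) ∧ y ≤ t j := ⟨k - 1, ⟨hkk, le_refl _⟩, hy.2⟩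
  classical
  set j := Nat.find hP with hjdef
  obtain ⟨⟨hj2, hjk⟩, hyj⟩ := Nat.find_spec hP
  have hmin : ∀ m, ((2 ≤ m ∧ m ≤ k - 1) ∧ y ≤ t m) → j ≤ m := fun m hm => Nat.find_le hm
  refine ⟨j, hj2, hjk, ?_, hyj⟩
  by_cases hj : j = 2
  · rw [hj]; simpa using hy.1
  · -- j ≥ 3, minimality: ¬ (y ≤ t (j-1))
    by_contra hle
    push_neg at hle
    have : Nat.find hP ≤ j - 1 := hmin _ ⟨⟨by omega, by omega⟩, hle⟩
    omega

/-- The quantizer equals `μ j` on the interior cell `j`. -/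
lemma quantizer_eq (k : ℕ) (hk : 3 ≤ k) (t μ : ℕ → ℝ)
    (ht : MonotoneOn t (Set.Icc 1 (k - 1)))
    (j : ℕ) (hj2 : 2 ≤ j) (hjk : j ≤ k - 1)
    (y : ℝ) (hy : y ∈ Set.Ioc (t (j - 1)) (t j)) :
    quantizer k t μ y = μ j := by
  have hj1 : j ≠ 1 := by omega
  have hjkne : j ≠ k := by omega
  unfold quantizer
  rw [Finset.sum_eq_single j]
  · have : y ∈ cell k t j := by
      unfold cell; rw [if_neg hj1, if_neg hjkne]; exact hy
    simp [Set.indicator_of_mem this]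
  · intro i hi hij
    have hi' : 1 ≤ i ∧ i ≤ k := by simpa using Finset.mem_Icc.mp hi
    have : y ∉ cell k t i := by
      unfold cell
      by_cases h1 : i = 1
      · rw [if_pos h1]
        have : t 1 < y := by
          calc t 1 ≤ t (j - 1) := ht ⟨le_refl _, by omega⟩ ⟨by omega, by omega⟩ (by omega)
            _ < y := hy.1
        simpa using not_le.mpr this
      · rw [if_neg h1]
        by_cases h2 : i = k
        · rw [if_pos h2]
          have : y ≤ t (k - 1) := hy.2.trans (ht ⟨by omega, hjk⟩ ⟨by omega, le_refl _⟩ hjk)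
          simpa using not_lt.mpr this
        · rw [if_neg h2]
          intro hyi
          rcases lt_or_gt_of_ne hij with hlt | hgt
          · -- i < j : y ≤ t i ≤ t (j-1) < y
            have : t i ≤ t (j - 1) :=
              ht ⟨by omega, by omega⟩ ⟨by omega, by omega⟩ (by omega)
            exact absurd (hyi.2.trans_lt (this.trans_lt hy.1)) (lt_irrefl y)
          · -- j < i : y ≤ t j ≤ t (i-1) < y
            have : t j ≤ t (i - 1) :=
              ht ⟨by omega, hjk⟩ ⟨by omega, by omega⟩ (by omega)
            exact absurd (hy.2.trans_lt (this.trans_lt hyi.1)) (lt_irrefl y)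
    simp [Set.indicator_of_notMem this]
  · intro h
    exact absurd (Finset.mem_Icc.mpr ⟨by omega, by omega⟩) h

/-- Deterministic core of Lemma S.1: if both `e` and `f + e` lie in `(t_1, t_{k-1}]`, then
`|Q(f + e) - Q(e) - f| ≤ 2 C_k(t)`, where `C_k(t) = max_{2 ≤ j ≤ k-1} (t_j - t_{j-1})`. -/
theorem quantizer_difference_recovers_signal
    (k : ℕ) (hk : 3 ≤ k) (t μ : ℕ → ℝ)
    (ht : StrictMonoOn t (Set.Icc 1 (k - 1)))
    (hμ : ∀ j, 2 ≤ j → j ≤ k - 1 → μ j ∈ Set.Ioc (t (j - 1)) (t j))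
    (Ck : ℝ)
    (hCk : IsGreatest ((fun j => t j - t (j - 1)) '' Set.Icc 2 (k - 1)) Ck)
    (e f : ℝ)
    (he : e ∈ Set.Ioc (t 1) (t (k - 1)))
    (hfe : f + e ∈ Set.Ioc (t 1) (t (k - 1))) :
    |quantizer k t μ (f + e) - quantizer k t μ e - f| ≤ 2 * Ck := by
  have htm : MonotoneOn t (Set.Icc 1 (k - 1)) := ht.monotoneOn
  obtain ⟨j, hj2, hjk, hej⟩ := exists_cell_index k hk t htm e he
  obtain ⟨i, hi2, hik, hfei⟩ := exists_cell_index k hk t htm (f + e) hfe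
  rw [quantizer_eq k hk t μ htm i hi2 hik _ hfei,
      quantizer_eq k hk t μ htm j hj2 hjk _ hej]
  have hμi := hμ i hi2 hik
  have hμj := hμ j hj2 hjk
  have hbi : |μ i - (f + e)| ≤ Ck := by
    have hmem : t i - t (i - 1) ∈ ((fun j => t j - t (j - 1)) '' Set.Icc 2 (k - 1)) :=
      ⟨i, ⟨hi2, hik⟩, rfl⟩
    have := hCk.2 hmem
    rw [abs_le]
    constructor <;> nlinarith [hμi.1, hμi.2, hfei.1, hfei.2]
  have hbj : |μ j - e| ≤ Ck := by
    have hmem : t j - t (j - 1) ∈ ((fun j => t j - t (j - 1)) '' Set.Icc 2 (k - 1)) :=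
      ⟨j, ⟨hj2, hjk⟩, rfl⟩
    have := hCk.2 hmem
    rw [abs_le]
    constructor <;> nlinarith [hμj.1, hμj.2, hej.1, hej.2]
  calc |μ i - μ j - f| = |(μ i - (f + e)) - (μ j - e)| := by ring_nf
    _ ≤ |μ i - (f + e)| + |μ j - e| := abs_sub _ _
    _ ≤ Ck + Ck := add_le_add hbi hbj
    _ = 2 * Ck := by ring
end
end

section
/- Let ε be a real random variable with E[ε²] < ∞ and σ > 0. Let t_1 < … < t_{k−1} be real thresholds and suppose there is an index s with 2 ≤ s ≤ k−1 and t_{s−1} ≤ 0 < t_s. Let μ_1, …, μ_k be real numbers with μ_j ∈ (t_{j−1}, t_j] for every 2 ≤ j ≤ k−1, set C_k(t) = max_{2≤j≤k−1}(t_j − t_{j−1}), and define τ_k² = Σ_{j=1}^k μ_j² P(σε ∈ R_j(t)). Then τ_k² ≤ 2σ² E[ε²] + 3 C_k(t)² + μ_1² P(σε ∈ R_1(t)) + μ_k² P(σε ∈ R_k(t)). -/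
open MeasureTheory Finset

noncomputable section

/-- Upper bound on the variance `τ_k² = ∑_j μ_j² P(σε ∈ R_j(t))` of the quantized noise
(Proposition 1, upper bound step):
`τ_k² ≤ 2σ² E[ε²] + 3 C_k(t)² + μ_1² P(σε ∈ R_1) + μ_k² P(σε ∈ R_k)`. -/
theorem quantized_noise_variance_upper_bound
    {Ω : Type*} [MeasurableSpace Ω] (P : Measure Ω) [IsProbabilityMeasure P]
    (ε : Ω → ℝ) (hmeas : Measurable ε)
    (hint : Integrable (fun ω => (ε ω) ^ 2) P)
    (σ : ℝ) (hσ : 0 < σ)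
    (k : ℕ) (t : ℕ → ℝ) (ht : StrictMonoOn t (Set.Icc 1 (k - 1)))
    (s : ℕ) (hs2 : 2 ≤ s) (hsk : s ≤ k - 1)
    (hts : t (s - 1) ≤ 0) (hts' : 0 < t s)
    (μ : ℕ → ℝ) (hμ : ∀ j, 2 ≤ j → j ≤ k - 1 → μ j ∈ Set.Ioc (t (j - 1)) (t j))
    (Ck : ℝ)
    (hCk : IsGreatest ((fun j => t j - t (j - 1)) '' Set.Icc 2 (k - 1)) Ck) :
    ∑ j ∈ Finset.Icc 1 k, (μ j) ^ 2 * (P {ω | σ * ε ω ∈ cell k t j}).toReal ≤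
      2 * σ ^ 2 * (∫ ω, (ε ω) ^ 2 ∂P) + 3 * Ck ^ 2 +
        (μ 1) ^ 2 * (P {ω | σ * ε ω ∈ cell k t 1}).toReal +
        (μ k) ^ 2 * (P {ω | σ * ε ω ∈ cell k t k}).toReal := by
  have hk3 : 3 ≤ k := by omega
  -- Ck ≥ 0
  have hCk0 : 0 ≤ Ck := by
    obtain ⟨⟨j0, hj0, hj0e⟩, hub⟩ := hCk
    simp only [Set.mem_Icc] at hj0
    simp only at hj0e
    have hlt : t (j0 - 1) < t j0 :=
      ht ⟨by omega, by omega⟩ ⟨by omega, by omega⟩ (by omega)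
    linarith
  -- the cells as events
  set A : ℕ → Set Ω := fun j => {ω | σ * ε ω ∈ Set.Ioc (t (j - 1)) (t j)} with hA
  have hmeasA : ∀ j, MeasurableSet (A j) := by
    intro j
    exact (measurable_const.mul hmeas) measurableSet_Ioc
  set f : Ω → ℝ := fun ω => 2 * σ ^ 2 * (ε ω) ^ 2 + 2 * Ck ^ 2 with hf
  have hf_int : Integrable f P := (hint.const_mul _).add (integrable_const _)
  have hf_nonneg : ∀ ω, 0 ≤ f ω := by
    intro ω; simp only [hf]; positivity
  -- middle bound per j
  have hmid : ∀ j ∈ Finset.Icc 2 (k - 1),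
      (μ j) ^ 2 * (P (A j)).toReal ≤ ∫ ω in A j, f ω ∂P := by
    intro j hj
    simp only [Finset.mem_Icc] at hj
    have hμj := hμ j hj.1 hj.2
    have hCkj : t j - t (j - 1) ≤ Ck := hCk.2 ⟨j, ⟨hj.1, hj.2⟩, rfl⟩
    have h1 : (μ j) ^ 2 * (P (A j)).toReal = ∫ ω in A j, (μ j) ^ 2 ∂P := by
      rw [setIntegral_const, smul_eq_mul, mul_comm]; rfl
    rw [h1]
    apply setIntegral_mono_on (integrableOn_const (measure_ne_top _ _))
      hf_int.integrableOn (hmeasA j)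
    intro ω hω
    simp only [hA, Set.mem_setOf_eq, Set.mem_Ioc] at hω
    have h2 : (μ j - σ * ε ω) ^ 2 ≤ Ck ^ 2 := by
      nlinarith [hμj.1, hμj.2, hω.1, hω.2]
    simp only [hf]
    nlinarith [sq_nonneg (μ j - 2 * (σ * ε ω)), h2]
  -- disjointness of middle cells
  have key : ∀ i j : ℕ, 2 ≤ i → i ≤ k - 1 → 2 ≤ j → j ≤ k - 1 → i < j →
      Disjoint (A i) (A j) := by
    intro i j hi1 hi2 hj1 hj2 hlt
    have hle : t i ≤ t (j - 1) := by
      rcases eq_or_lt_of_le (show i ≤ j - 1 by omega) with h | h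
      · exact le_of_eq (by rw [h])
      · exact le_of_lt (ht ⟨by omega, by omega⟩ ⟨by omega, by omega⟩ h)
    rw [Set.disjoint_left]
    intro ω hωi hωj
    simp only [hA, Set.mem_setOf_eq, Set.mem_Ioc] at hωi hωj
    linarith [hωi.2, hωj.1, hle]
  have hdisj : Set.Pairwise (↑(Finset.Icc 2 (k - 1)) : Set ℕ) (Function.onFun Disjoint A) := by
    intro i hi j hj hij
    simp only [Finset.coe_Icc, Set.mem_Icc] at hi hj
    rcases lt_or_gt_of_ne hij with h | h
    · exact key i j hi.1 hi.2 hj.1 hj.2 h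
    · exact (key j i hj.1 hj.2 hi.1 hi.2 h).symm
  -- sum over middle cells
  have hsum_mid : ∑ j ∈ Finset.Icc 2 (k - 1), (μ j) ^ 2 * (P (A j)).toReal ≤
      2 * σ ^ 2 * (∫ ω, (ε ω) ^ 2 ∂P) + 2 * Ck ^ 2 := by
    calc ∑ j ∈ Finset.Icc 2 (k - 1), (μ j) ^ 2 * (P (A j)).toReal
        ≤ ∑ j ∈ Finset.Icc 2 (k - 1), ∫ ω in A j, f ω ∂P := Finset.sum_le_sum hmid
      _ = ∫ ω in ⋃ j ∈ Finset.Icc 2 (k - 1), A j, f ω ∂P :=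
          (integral_biUnion_finset _ (fun j _ => hmeasA j) hdisj
            (fun j _ => hf_int.integrableOn)).symm
      _ ≤ ∫ ω, f ω ∂P := setIntegral_le_integral hf_int (ae_of_all _ hf_nonneg)
      _ = 2 * σ ^ 2 * (∫ ω, (ε ω) ^ 2 ∂P) + 2 * Ck ^ 2 := by
          simp only [hf]
          rw [integral_add (hint.const_mul _) (integrable_const _),
            integral_const_mul, integral_const]
          simp
  -- split the sum
  have hsplit : Finset.Icc 1 k = insert 1 (insert k (Finset.Icc 2 (k - 1))) := by
    ext j; simp [Finset.mem_Icc]; omega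
  have hmidcell : ∀ j ∈ Finset.Icc 2 (k - 1),
      (μ j) ^ 2 * (P {ω | σ * ε ω ∈ cell k t j}).toReal
        = (μ j) ^ 2 * (P (A j)).toReal := by
    intro j hj
    simp only [Finset.mem_Icc] at hj
    have : cell k t j = Set.Ioc (t (j - 1)) (t j) := by
      unfold cell
      rw [if_neg (by omega), if_neg (by omega)]
    rw [this]
  rw [hsplit, Finset.sum_insert (by simp [Finset.mem_Icc]; omega),
    Finset.sum_insert (by simp [Finset.mem_Icc]; omega),
    Finset.sum_congr rfl hmidcell]
  nlinarith [hsum_mid, sq_nonneg Ck]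

end
end

section
/- Let ε be a real random variable with E[ε²] < ∞ and σ > 0. Let t_1 < … < t_{k−1} be real thresholds and suppose there is an index s with 3 ≤ s ≤ k−1 and t_{s−1} ≤ 0. Let μ_2, …, μ_{s−1} be real numbers with μ_j ∈ (t_{j−1}, t_j] for every 2 ≤ j ≤ s−1, and set C_k(t) = max_{2≤j≤k−1}(t_j − t_{j−1}). Then Σ_{j=2}^{s−1} μ_j² P(σε ∈ R_j(t)) ≥ (σ²/2) E[ε² · 1(t_1 < σε ≤ t_{s−1})] − C_k(t)². -/
/-! Every sample in `R_j(t)` is within the mesh `C_k(t)` of the level `μ_j`, and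
`x² ≤ 2μ² + 2(x - μ)²`; so on `R_j(t)` the integrand `σ²ε²/2 - C_k(t)²` is at most `μ_j²`.
Integrating over the disjoint cells `R_2, …, R_{s-1}`, whose union is `(t_1, t_{s-1}]`, and using
`P(t_1 < σε ≤ t_{s-1}) ≤ 1` gives the bound. -/

open MeasureTheory Finset

noncomputable section

theorem cell_of_ne {k j : ℕ} (t : ℕ → ℝ) (h1 : j ≠ 1) (hk : j ≠ k) :
    cell k t j = Set.Ioc (t (j - 1)) (t j) := by
  simp [cell, h1, hk]

theorem sq_div_two_le_sq_add_sq_of_abs_sub_le {x m C : ℝ} (h : |x - m| ≤ C) :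
    x ^ 2 / 2 ≤ m ^ 2 + C ^ 2 := by
  have hsq : (x - m) ^ 2 ≤ C ^ 2 := sq_le_sq' (abs_le.1 h).1 (abs_le.1 h).2
  nlinarith [sq_nonneg (x - 2 * m)]

namespace MonotoneOn

variable {α : Type*} [LinearOrder α] {f : ℕ → α} {a b : ℕ}

theorem biUnion_Icc_Ioc_sub_one (hf : MonotoneOn f (Set.Icc a b)) (hab : a ≤ b) :
    ⋃ j ∈ Finset.Icc (a + 1) b, Set.Ioc (f (j - 1)) (f j) = Set.Ioc (f a) (f b) := by
  induction b, hab using Nat.le_induction with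
  | base => simp
  | succ n han ih =>
    have hab : f a ≤ f n := hf ⟨le_rfl, by omega⟩ ⟨han, by omega⟩ han
    have hn : f n ≤ f (n + 1) := hf ⟨han, by omega⟩ ⟨by omega, le_rfl⟩ (by omega)
    rw [← Finset.insert_Icc_right_eq_Icc_add_one (by omega), Finset.set_biUnion_insert,
      ih (hf.mono (Set.Icc_subset_Icc_right (by omega))), Nat.add_sub_cancel, Set.union_comm,
      Set.Ioc_union_Ioc_eq_Ioc hab hn]

theorem pairwiseDisjoint_Ioc_sub_one (hf : MonotoneOn f (Set.Icc a b)) :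
    (Finset.Icc (a + 1) b : Set ℕ).PairwiseDisjoint fun j => Set.Ioc (f (j - 1)) (f j) := by
  have key : ∀ i ∈ Finset.Icc (a + 1) b, ∀ j ∈ Finset.Icc (a + 1) b, i < j →
      Disjoint (Set.Ioc (f (i - 1)) (f i)) (Set.Ioc (f (j - 1)) (f j)) := by
    intro i hi j hj hij
    simp only [Finset.mem_Icc] at hi hj
    have hfij : f i ≤ f (j - 1) := hf ⟨by omega, by omega⟩ ⟨by omega, by omega⟩ (by omega)
    exact Set.disjoint_left.2 fun x hxi hxj => (hxi.2.trans hfij).not_gt hxj.1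
  intro i hi j hj hij
  rcases hij.lt_or_gt with h | h
  · exact key i hi j hj h
  · exact (key j hj i hi h).symm

end MonotoneOn

theorem setIntegral_biUnion_le_sum_mul_measureReal {Ω ι : Type*} [MeasurableSpace Ω]
    {P : Measure Ω} [IsFiniteMeasure P] {I : Finset ι} {A : ι → Set Ω}
    (hA : ∀ i ∈ I, MeasurableSet (A i)) (hdisj : (I : Set ι).PairwiseDisjoint A)
    {g : Ω → ℝ} (hg : Integrable g P) {m : ι → ℝ} (hgm : ∀ i ∈ I, ∀ ω ∈ A i, g ω ≤ m i) :
    ∫ ω in ⋃ i ∈ I, A i, g ω ∂P ≤ ∑ i ∈ I, m i * P.real (A i) := by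
  rw [integral_biUnion_finset I hA hdisj fun i _ => hg.integrableOn]
  refine Finset.sum_le_sum fun i hi => ?_
  calc ∫ ω in A i, g ω ∂P ≤ ∫ _ in A i, m i ∂P :=
        setIntegral_mono_on hg.integrableOn (integrable_const _) (hA i hi) (hgm i hi)
    _ = m i * P.real (A i) := by rw [setIntegral_const, smul_eq_mul, mul_comm]

theorem quantized_noise_variance_lower_bound_general
    {Ω : Type*} [MeasurableSpace Ω] (P : Measure Ω) [IsProbabilityMeasure P]
    (ε : Ω → ℝ) (hmeas : Measurable ε)
    (hint : Integrable (fun ω => (ε ω) ^ 2) P)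
    (σ : ℝ)
    (k : ℕ) (t : ℕ → ℝ) (ht : StrictMonoOn t (Set.Icc 1 (k - 1)))
    (s : ℕ) (hs3 : 3 ≤ s) (hsk : s ≤ k - 1)
    (μ : ℕ → ℝ) (hμ : ∀ j, 2 ≤ j → j ≤ s - 1 → μ j ∈ Set.Ioc (t (j - 1)) (t j))
    (Ck : ℝ)
    (hCk : IsGreatest ((fun j => t j - t (j - 1)) '' Set.Icc 2 (k - 1)) Ck) :
    (σ ^ 2 / 2) * (∫ ω in {ω | σ * ε ω ∈ Set.Ioc (t 1) (t (s - 1))}, (ε ω) ^ 2 ∂P)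
        - Ck ^ 2 ≤
      ∑ j ∈ Finset.Icc 2 (s - 1), (μ j) ^ 2 * (P {ω | σ * ε ω ∈ cell k t j}).toReal := by
  have hmono : MonotoneOn t (Set.Icc 1 (s - 1)) :=
    ht.monotoneOn.mono (Set.Icc_subset_Icc_right (by omega))
  set A : ℕ → Set Ω := fun j => (fun ω => σ * ε ω) ⁻¹' Set.Ioc (t (j - 1)) (t j)
  have hcell : ∀ j ∈ Finset.Icc 2 (s - 1), {ω | σ * ε ω ∈ cell k t j} = A j := by
    intro j hj
    rw [Finset.mem_Icc] at hj
    rw [cell_of_ne t (by omega) (by omega)]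
    rfl
  have hunion : ⋃ j ∈ Finset.Icc 2 (s - 1), A j = {ω | σ * ε ω ∈ Set.Ioc (t 1) (t (s - 1))} := by
    simp only [A, ← Set.preimage_iUnion₂, hmono.biUnion_Icc_Ioc_sub_one (by omega)]
    rfl
  have hbound : ∀ j ∈ Finset.Icc 2 (s - 1), ∀ ω ∈ A j, σ ^ 2 / 2 * ε ω ^ 2 - Ck ^ 2 ≤ μ j ^ 2 := by
    intro j hj ω ⟨hω₁, hω₂⟩
    rw [Finset.mem_Icc] at hj
    obtain ⟨hμ₁, hμ₂⟩ := hμ j hj.1 hj.2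
    have hmesh : t j - t (j - 1) ≤ Ck := hCk.2 ⟨j, ⟨hj.1, by omega⟩, rfl⟩
    have := sq_div_two_le_sq_add_sq_of_abs_sub_le
      (abs_le.2 ⟨by linarith, by linarith⟩ : |σ * ε ω - μ j| ≤ Ck)
    linarith [mul_pow σ (ε ω) 2]
  have key := setIntegral_biUnion_le_sum_mul_measureReal (P := P) (I := Finset.Icc 2 (s - 1))
    (A := A) (g := fun ω => σ ^ 2 / 2 * ε ω ^ 2 - Ck ^ 2) (m := fun j => μ j ^ 2)
    (fun j _ => (measurable_const.mul hmeas) measurableSet_Ioc)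
    (fun i hi j hj hij => (hmono.pairwiseDisjoint_Ioc_sub_one hi hj hij).preimage _)
    ((hint.const_mul _).sub (integrable_const _)) hbound
  rw [hunion, integral_sub (hint.const_mul _).integrableOn (integrable_const _),
    integral_const_mul, setIntegral_const, smul_eq_mul] at key
  calc σ ^ 2 / 2 * ∫ ω in {ω | σ * ε ω ∈ Set.Ioc (t 1) (t (s - 1))}, ε ω ^ 2 ∂P - Ck ^ 2
      ≤ σ ^ 2 / 2 * ∫ ω in {ω | σ * ε ω ∈ Set.Ioc (t 1) (t (s - 1))}, ε ω ^ 2 ∂P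
          - P.real {ω | σ * ε ω ∈ Set.Ioc (t 1) (t (s - 1))} * Ck ^ 2 := by
        nlinarith [sq_nonneg Ck, measureReal_le_one (μ := P)
          (s := {ω | σ * ε ω ∈ Set.Ioc (t 1) (t (s - 1))})]
    _ ≤ ∑ j ∈ Finset.Icc 2 (s - 1), μ j ^ 2 * P.real (A j) := key
    _ = ∑ j ∈ Finset.Icc 2 (s - 1), μ j ^ 2 * (P {ω | σ * ε ω ∈ cell k t j}).toReal :=
        Finset.sum_congr rfl fun j hj => by rw [hcell j hj, measureReal_def]

/-- Lower bound step in the proof of Proposition 1: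
`∑_{j=2}^{s-1} μ_j² P(σε ∈ R_j(t)) ≥ (σ²/2) E[ε² 1(t_1 < σε ≤ t_{s-1})] - C_k(t)²`. -/
theorem quantized_noise_variance_lower_bound
    {Ω : Type*} [MeasurableSpace Ω] (P : Measure Ω) [IsProbabilityMeasure P]
    (ε : Ω → ℝ) (hmeas : Measurable ε)
    (hint : Integrable (fun ω => (ε ω) ^ 2) P)
    (σ : ℝ) (hσ : 0 < σ)
    (k : ℕ) (t : ℕ → ℝ) (ht : StrictMonoOn t (Set.Icc 1 (k - 1)))
    (s : ℕ) (hs3 : 3 ≤ s) (hsk : s ≤ k - 1) (hts : t (s - 1) ≤ 0)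
    (μ : ℕ → ℝ) (hμ : ∀ j, 2 ≤ j → j ≤ s - 1 → μ j ∈ Set.Ioc (t (j - 1)) (t j))
    (Ck : ℝ)
    (hCk : IsGreatest ((fun j => t j - t (j - 1)) '' Set.Icc 2 (k - 1)) Ck) :
    (σ ^ 2 / 2) * (∫ ω in {ω | σ * ε ω ∈ Set.Ioc (t 1) (t (s - 1))}, (ε ω) ^ 2 ∂P)
        - Ck ^ 2 ≤
      ∑ j ∈ Finset.Icc 2 (s - 1), (μ j) ^ 2 * (P {ω | σ * ε ω ∈ cell k t j}).toReal :=
  quantized_noise_variance_lower_bound_general P ε hmeas hint σ k t ht s hs3 hsk μ hμ Ck hCk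

end
end
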